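/- arXiv:2409.16389 — 2 statements merged into one kernel-verified Lean document; each statement's English description precedes it below -/
import Mathlib

section
/- Let the nonlinear system x_{k+1} = f(x_k, u_k), y_k = g(x_k, u_k) admit a Koopman linear embedding (Φ, A, B, C, D) of dimension n_z. Let L = T_ini + N with T_ini ≥ n_z, and suppose l ≥ mL + n_z length-L trajectories of the nonlinear system, with initial states x₀^i, provide lifted excitation of order L; let H_d = col(U_P, U_F, Y_P, Y_F) be the corresponding trajectory library, where U_P, Y_P consist of the first T_ini block-rows and U_F, Y_F of the last N block-rows of the stacked input and output data. Let (u_ini, y_ini) be a length-T_ini input-output trajectory of the nonlinear system. Then for any future input u_F ∈ ℝ^{mN} and any y_F ∈ ℝ^{pN}, the concatenated sequence col(u_ini, u_F) with output col(y_ini, y_F) is a valid length-L trajectory of the nonlinear system if and only if there exists g ∈ ℝ^l such that U_P g = u_ini, Y_P g = y_ini, U_F g = u_F and Y_F g = y_F. -/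
/-!
The Koopman embedding turns every trajectory of the nonlinear system into a trajectory of the
linear system `(A, B, C, D)` with state `Φ x`, and trajectories of a linear system form a vector
space. Lifted excitation lets one match any input sequence together with any lifted initial
state by a combination of the data; since a linear trajectory is determined by its input and
initial state, the combined data then reproduces the output as well. Conversely, a combination
matching `(u, y)` is a linear trajectory with input `u`, and so is the lift of the nonlinear
system started at the initial state of `(u_ini, y_ini)` and driven by `u`. Their outputs agree for
the first `T_ini ≥ n_z` steps, and by Cayley–Hamilton the unobservable subspace is already cut
out by the first `n_z` output maps `C Aʲ`, so they agree on the whole horizon.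
-/

open Matrix

theorem Matrix.mulVec_surjective_of_rank_eq_card {K ρ J : Type*} [Field K] [Fintype ρ]
    [Fintype J] {M : Matrix ρ J K} (h : M.rank = Fintype.card ρ) :
    Function.Surjective M.mulVec := by
  have : LinearMap.range M.mulVecLin = ⊤ := Submodule.eq_top_of_finrank_eq <| by
    rw [Module.finrank_fintype_fun_eq_card, ← h, Matrix.rank]
  exact LinearMap.range_eq_top.mp this

open Polynomial in
theorem Matrix.mulVec_pow_mulVec_eq_zero_of_forall_lt_card {R ι κ : Type*} [CommRing R]
    [Fintype ι] [DecidableEq ι] {A : Matrix ι ι R} {C : Matrix κ ι R} {v : ι → R}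
    (h : ∀ j < Fintype.card ι, C *ᵥ (A ^ j *ᵥ v) = 0) (k : ℕ) : C *ᵥ (A ^ k *ᵥ v) = 0 := by
  nontriviality R
  set q := X ^ k %ₘ A.charpoly
  have hq : q.degree < Fintype.card ι :=
    A.charpoly_degree_eq_dim ▸ degree_modByMonic_lt _ A.charpoly_monic
  rw [pow_eq_aeval_mod_charpoly, aeval_eq_sum_range, Matrix.sum_mulVec, mulVec_sum]
  refine Finset.sum_eq_zero fun j _ => ?_
  rw [Matrix.smul_mulVec, mulVec_smul]
  rcases lt_or_ge j (Fintype.card ι) with hj | hj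
  · rw [h j hj, smul_zero]
  · rw [coeff_eq_zero_of_degree_lt (hq.trans_le (by exact_mod_cast hj)), zero_smul]

section Trajectory

variable {X U Y : Type*}

def IsTrajectory (f : X → U → X) (g : X → U → Y) (L : ℕ) (u : ℕ → U) (y : ℕ → Y)
    (x : ℕ → X) : Prop :=
  ∀ k < L, x (k + 1) = f (x k) (u k) ∧ y k = g (x k) (u k)

def simulate (f : X → U → X) (x₀ : X) (u : ℕ → U) : ℕ → X
  | 0 => x₀
  | k + 1 => f (simulate f x₀ u k) (u k)

theorem isTrajectory_simulate (f : X → U → X) (g : X → U → Y) (L : ℕ) (x₀ : X) (u : ℕ → U) :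
    IsTrajectory f g L u (fun k => g (simulate f x₀ u k) (u k)) (simulate f x₀ u) :=
  fun _ _ => ⟨rfl, rfl⟩

namespace IsTrajectory

variable {f : X → U → X} {g : X → U → Y} {L : ℕ} {u u' : ℕ → U} {y y' : ℕ → Y} {x x' : ℕ → X}

theorem mono {T : ℕ} (h : IsTrajectory f g L u y x) (hT : T ≤ L) : IsTrajectory f g T u y x :=
  fun k hk => h k (hk.trans_le hT)

theorem congr (h : IsTrajectory f g L u y x) (hu : ∀ k < L, u k = u' k)
    (hy : ∀ k < L, y k = y' k) : IsTrajectory f g L u' y' x := fun k hk => by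
  rw [← hu k hk, ← hy k hk]
  exact h k hk

theorem eq_simulate (h : IsTrajectory f g L u y x) : ∀ k ≤ L, x k = simulate f (x 0) u k
  | 0, _ => rfl
  | k + 1, hk => by rw [(h k hk).1, h.eq_simulate k (by omega)]; rfl

theorem output_eq (h : IsTrajectory f g L u y x) (h' : IsTrajectory f g L u y' x')
    (h₀ : x 0 = x' 0) : ∀ k < L, y k = y' k := fun k hk => by
  rw [(h k hk).2, (h' k hk).2, h.eq_simulate k hk.le, h'.eq_simulate k hk.le, h₀]

theorem comp {Z : Type*} {F : Z → U → Z} {G : Z → U → Y} {Φ : X → Z}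
    (h : IsTrajectory f g L u y x) (hf : ∀ x u, Φ (f x u) = F (Φ x) u)
    (hg : ∀ x u, g x u = G (Φ x) u) : IsTrajectory F G L u y (Φ ∘ x) := fun k hk =>
  ⟨by simp only [Function.comp_apply, (h k hk).1, hf], by rw [(h k hk).2, hg]; rfl⟩

end IsTrajectory

end Trajectory

section Linear

variable {R ι μ π : Type*} [CommRing R] [Fintype ι] [Fintype μ]
  (A : Matrix ι ι R) (B : Matrix ι μ R) (C : Matrix π ι R) (D : Matrix π μ R)

abbrev IsLinearTrajectory (L : ℕ) (u : ℕ → μ → R) (y : ℕ → π → R) (z : ℕ → ι → R) : Prop :=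
  IsTrajectory (fun z u => A *ᵥ z + B *ᵥ u) (fun z u => C *ᵥ z + D *ᵥ u) L u y z

variable {A B C D} {L : ℕ} {u : ℕ → μ → R} {y y' : ℕ → π → R} {z z' : ℕ → ι → R}

namespace IsLinearTrajectory

theorem sum_smul {J : Type*} (s : Finset J) (c : J → R) {u : J → ℕ → μ → R}
    {y : J → ℕ → π → R} {z : J → ℕ → ι → R}
    (h : ∀ i ∈ s, IsLinearTrajectory A B C D L (u i) (y i) (z i)) :
    IsLinearTrajectory A B C D L (∑ i ∈ s, c i • u i) (∑ i ∈ s, c i • y i)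
      (∑ i ∈ s, c i • z i) := fun k hk => by
  simp only [Finset.sum_apply, Pi.smul_apply, mulVec_sum, mulVec_smul, ← Finset.sum_add_distrib,
    ← smul_add]
  exact ⟨Finset.sum_congr rfl fun i hi => by rw [(h i hi k hk).1],
    Finset.sum_congr rfl fun i hi => by rw [(h i hi k hk).2]⟩

variable [DecidableEq ι]

theorem sub_eq_pow_mulVec (h : IsLinearTrajectory A B C D L u y z)
    (h' : IsLinearTrajectory A B C D L u y' z') :
    ∀ k ≤ L, z k - z' k = A ^ k *ᵥ (z 0 - z' 0)
  | 0, _ => by rw [pow_zero, one_mulVec]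
  | k + 1, hk => by
    rw [(h k hk).1, (h' k hk).1, add_sub_add_right_eq_sub, ← mulVec_sub,
      sub_eq_pow_mulVec h h' k (by omega), mulVec_mulVec, pow_succ']

theorem output_sub_eq (h : IsLinearTrajectory A B C D L u y z)
    (h' : IsLinearTrajectory A B C D L u y' z') :
    ∀ k < L, y k - y' k = C *ᵥ (A ^ k *ᵥ (z 0 - z' 0)) := fun k hk => by
  rw [(h k hk).2, (h' k hk).2, add_sub_add_right_eq_sub, ← mulVec_sub,
    h.sub_eq_pow_mulVec h' k hk.le]

theorem output_eq_of_forall_lt_card (h : IsLinearTrajectory A B C D L u y z)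
    (h' : IsLinearTrajectory A B C D L u y' z') (hL : Fintype.card ι ≤ L)
    (hy : ∀ k < Fintype.card ι, y k = y' k) : ∀ k < L, y k = y' k := fun k hk => by
  have hobs := mulVec_pow_mulVec_eq_zero_of_forall_lt_card (C := C) (A := A) (v := z 0 - z' 0)
    fun j hj => by rw [← h.output_sub_eq h' j (hj.trans_le hL), hy j hj, sub_self]
  exact sub_eq_zero.mp ((h.output_sub_eq h' k hk).trans (hobs k))

end IsLinearTrajectory

end Linear

section Koopman

variable {X R ι μ π J : Type*} [CommRing R] [Fintype ι] [Fintype μ] [Fintype J]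

/-- Surjectivity of `c ↦ H_K c` on the first `L` input steps and the lifted initial states. -/
def HasLiftedExcitation (L : ℕ) (ud : J → ℕ → μ → R) (z₀ : J → ι → R) : Prop :=
  ∀ (v : ℕ → μ → R) (w : ι → R),
    ∃ c : J → R, (∀ k < L, ∑ i, c i • ud i k = v k) ∧ ∑ i, c i • z₀ i = w

theorem hasLiftedExcitation_of_rank_eq {K : Type*} [Field K] {L : ℕ} {ud : J → ℕ → μ → K}
    {z₀ : J → ι → K}
    (h : (Matrix.of fun (r : (Fin L × μ) ⊕ ι) (i : J) =>
      Sum.elim (fun ka : Fin L × μ => ud i ka.1 ka.2) (z₀ i) r).rank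
      = Fintype.card ((Fin L × μ) ⊕ ι)) :
    HasLiftedExcitation L ud z₀ := fun v w => by
  obtain ⟨c, hc⟩ := mulVec_surjective_of_rank_eq_card h
    (Sum.elim (fun ka : Fin L × μ => v ka.1 ka.2) w)
  refine ⟨c, fun k hk => funext fun a => ?_, funext fun a => ?_⟩
  · simpa [mulVec, dotProduct, Finset.sum_apply, mul_comm] using congrFun hc (.inl (⟨k, hk⟩, a))
  · simpa [mulVec, dotProduct, Finset.sum_apply, mul_comm] using congrFun hc (.inr a)

variable {f : X → (μ → R) → X} {g : X → (μ → R) → π → R} {Φ : X → ι → R}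
  {A : Matrix ι ι R} {B : Matrix ι μ R} {C : Matrix π ι R} {D : Matrix π μ R}
  {L : ℕ} {ud : J → ℕ → μ → R} {yd : J → ℕ → π → R} {xd : J → ℕ → X}
  {u : ℕ → μ → R} {y : ℕ → π → R}

variable (f g Φ A B C D) in
structure IsKoopmanEmbedding : Prop where
  map_step : ∀ x u, Φ (f x u) = A *ᵥ Φ x + B *ᵥ u
  output_eq : ∀ x u, g x u = C *ᵥ Φ x + D *ᵥ u

namespace IsKoopmanEmbedding

variable (hK : IsKoopmanEmbedding f g Φ A B C D)
  (hd : ∀ i, IsTrajectory f g L (ud i) (yd i) (xd i))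
include hK hd

theorem isLinearTrajectory_sum_smul (c : J → R) (hu : ∀ k < L, ∑ i, c i • ud i k = u k) :
    IsLinearTrajectory A B C D L u (∑ i, c i • yd i) (∑ i, c i • (Φ ∘ xd i)) :=
  (IsLinearTrajectory.sum_smul Finset.univ c fun i _ =>
    (hd i).comp hK.map_step hK.output_eq).congr
    (fun k hk => by rw [Finset.sum_apply, ← hu k hk]; rfl) fun _ _ => rfl

theorem exists_sum_smul_eq_of_isTrajectory (hexc : HasLiftedExcitation L ud fun i => Φ (xd i 0))
    {x : ℕ → X} (hx : IsTrajectory f g L u y x) :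
    ∃ c : J → R, (∀ k < L, ∑ i, c i • ud i k = u k) ∧ ∀ k < L, ∑ i, c i • yd i k = y k := by
  obtain ⟨c, hu, hz₀⟩ := hexc u (Φ (x 0))
  have hy := (hK.isLinearTrajectory_sum_smul hd c hu).output_eq
    (hx.comp hK.map_step hK.output_eq) ((Finset.sum_apply 0 _ _).trans hz₀)
  exact ⟨c, hu, fun k hk => (Finset.sum_apply k _ _).symm.trans (hy k hk)⟩

theorem exists_isTrajectory_of_sum_smul_eq [DecidableEq ι] {T : ℕ} (hT : Fintype.card ι ≤ T)
    (hTL : T ≤ L) {x : ℕ → X} (hx : IsTrajectory f g T u y x) (c : J → R)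
    (hu : ∀ k < L, ∑ i, c i • ud i k = u k) (hy : ∀ k < L, ∑ i, c i • yd i k = y k) :
    ∃ x : ℕ → X, IsTrajectory f g L u y x := by
  have hsim := isTrajectory_simulate f g L (x 0) u
  have hyT := hx.output_eq (hsim.mono hTL) rfl
  have hyL := IsLinearTrajectory.output_eq_of_forall_lt_card
    ((hK.isLinearTrajectory_sum_smul hd c hu).congr (fun _ _ => rfl)
      fun k hk => (Finset.sum_apply k _ _).trans (hy k hk))
    (hsim.comp hK.map_step hK.output_eq) (hT.trans hTL) fun k hk => hyT k (hk.trans_le hT)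
  exact ⟨_, hsim.congr (fun _ _ => rfl) fun k hk => (hyL k hk).symm⟩

end IsKoopmanEmbedding

end Koopman

theorem forall_lt_add_eq_ite_iff {V : Type*} {T N : ℕ} {w a b : ℕ → V} :
    (∀ k < T + N, w k = if k < T then a k else b (k - T)) ↔
      (∀ k < T, w k = a k) ∧ ∀ k < N, w (T + k) = b k := by
  refine ⟨fun h => ⟨fun k hk => ?_, fun k hk => ?_⟩, fun ⟨ha, hb⟩ k hk => ?_⟩
  · simpa [hk] using h k (by omega)
  · simpa using h (T + k) (by omega)
  · split_ifs with hkT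
    · exact ha k hkT
    · simpa [Nat.add_sub_cancel' (not_lt.mp hkT)] using hb (k - T) (by omega)

theorem data_driven_representation_koopman_general
    (n m p nz Tini N l : ℕ) (hTini : nz ≤ Tini)
    (f : (Fin n → ℝ) → (Fin m → ℝ) → (Fin n → ℝ))
    (g : (Fin n → ℝ) → (Fin m → ℝ) → (Fin p → ℝ))
    (Φ : (Fin n → ℝ) → (Fin nz → ℝ))
    (A : Matrix (Fin nz) (Fin nz) ℝ) (B : Matrix (Fin nz) (Fin m) ℝ)
    (C : Matrix (Fin p) (Fin nz) ℝ) (D : Matrix (Fin p) (Fin m) ℝ)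
    -- (Φ, A, B, C, D) is a Koopman linear embedding of the nonlinear system (f, g):
    (hdyn : ∀ x u, Φ (f x u) = A.mulVec (Φ x) + B.mulVec u)
    (hout : ∀ x u, g x u = C.mulVec (Φ x) + D.mulVec u)
    -- the data: l ≥ mL + n_z length-L trajectories (L = T_ini + N) with initial states x₀^i:
    (ud : Fin l → ℕ → Fin m → ℝ) (yd : Fin l → ℕ → Fin p → ℝ)
    (x₀ : Fin l → Fin n → ℝ)
    (hdata : ∀ i : Fin l, ∃ x : ℕ → (Fin n → ℝ), x 0 = x₀ i ∧
      ∀ k < Tini + N, x (k + 1) = f (x k) (ud i k) ∧ yd i k = g (x k) (ud i k))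
    -- lifted excitation of order L = T_ini + N:
    (hHK : (Matrix.of fun (r : (Fin (Tini + N) × Fin m) ⊕ Fin nz) (i : Fin l) =>
        Sum.elim (fun ka : Fin (Tini + N) × Fin m => ud i (ka.1 : ℕ) ka.2)
          (fun a : Fin nz => Φ (x₀ i) a) r).rank
      = Fintype.card ((Fin (Tini + N) × Fin m) ⊕ Fin nz))
    -- (u_ini, y_ini) is a length-T_ini input-output trajectory of the nonlinear system:
    (uini : ℕ → Fin m → ℝ) (yini : ℕ → Fin p → ℝ)
    (hini : ∃ x : ℕ → (Fin n → ℝ),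
      ∀ k < Tini, x (k + 1) = f (x k) (uini k) ∧ yini k = g (x k) (uini k))
    -- any future input u_F and any y_F:
    (uF : ℕ → Fin m → ℝ) (yF : ℕ → Fin p → ℝ) :
    -- the concatenated input-output sequence is a valid length-L trajectory of the
    -- nonlinear system iff ∃ g with U_P g = u_ini, Y_P g = y_ini, U_F g = u_F, Y_F g = y_F:
    (∃ x : ℕ → (Fin n → ℝ),
      ∀ k < Tini + N,
        x (k + 1) = f (x k) (if k < Tini then uini k else uF (k - Tini)) ∧
        (if k < Tini then yini k else yF (k - Tini))
          = g (x k) (if k < Tini then uini k else uF (k - Tini))) ↔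
    (∃ gc : Fin l → ℝ,
      (∀ k < Tini, ∀ a : Fin m, ∑ i : Fin l, ud i k a * gc i = uini k a) ∧
      (∀ k < Tini, ∀ b : Fin p, ∑ i : Fin l, yd i k b * gc i = yini k b) ∧
      (∀ k < N, ∀ a : Fin m, ∑ i : Fin l, ud i (Tini + k) a * gc i = uF k a) ∧
      (∀ k < N, ∀ b : Fin p, ∑ i : Fin l, yd i (Tini + k) b * gc i = yF k b)) := by
  set u : ℕ → Fin m → ℝ := fun k => if k < Tini then uini k else uF (k - Tini)
  set y : ℕ → Fin p → ℝ := fun k => if k < Tini then yini k else yF (k - Tini)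
  have hK : IsKoopmanEmbedding f g Φ A B C D := ⟨hdyn, hout⟩
  choose xd hxd₀ hxd using hdata
  have hexc : HasLiftedExcitation (Tini + N) ud fun i => Φ (xd i 0) := by
    simp only [hxd₀]
    exact hasLiftedExcitation_of_rank_eq hHK
  obtain ⟨xini, hxini⟩ := hini
  have hxini : IsTrajectory f g Tini u y xini := IsTrajectory.congr (u := uini) (y := yini)
    hxini (fun k hk => (if_pos hk).symm) fun k hk => (if_pos hk).symm
  calc (∃ x, IsTrajectory f g (Tini + N) u y x)
      ↔ ∃ c : Fin l → ℝ, (∀ k < Tini + N, ∑ i, c i • ud i k = u k) ∧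
          ∀ k < Tini + N, ∑ i, c i • yd i k = y k :=
        ⟨fun ⟨_, hx⟩ => hK.exists_sum_smul_eq_of_isTrajectory hxd hexc hx,
          fun ⟨c, hu, hy⟩ => hK.exists_isTrajectory_of_sum_smul_eq hxd
            ((Fintype.card_fin nz).trans_le hTini) (Nat.le_add_right Tini N) hxini c hu hy⟩
    _ ↔ _ := exists_congr fun c => by
        refine (and_congr forall_lt_add_eq_ite_iff forall_lt_add_eq_ite_iff).trans ?_
        simp only [funext_iff, Finset.sum_apply, Pi.smul_apply, smul_eq_mul, mul_comm (c _)]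
        tauto

theorem data_driven_representation_koopman
    (n m p nz Tini N l : ℕ) (hTini : nz ≤ Tini)
    (f : (Fin n → ℝ) → (Fin m → ℝ) → (Fin n → ℝ))
    (g : (Fin n → ℝ) → (Fin m → ℝ) → (Fin p → ℝ))
    (Φ : (Fin n → ℝ) → (Fin nz → ℝ))
    (A : Matrix (Fin nz) (Fin nz) ℝ) (B : Matrix (Fin nz) (Fin m) ℝ)
    (C : Matrix (Fin p) (Fin nz) ℝ) (D : Matrix (Fin p) (Fin m) ℝ)
    -- (Φ, A, B, C, D) is a Koopman linear embedding of the nonlinear system (f, g):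
    (hdyn : ∀ x u, Φ (f x u) = A.mulVec (Φ x) + B.mulVec u)
    (hout : ∀ x u, g x u = C.mulVec (Φ x) + D.mulVec u)
    -- the data: l ≥ mL + n_z length-L trajectories (L = T_ini + N) with initial states x₀^i:
    (hl : m * (Tini + N) + nz ≤ l)
    (ud : Fin l → ℕ → Fin m → ℝ) (yd : Fin l → ℕ → Fin p → ℝ)
    (x₀ : Fin l → Fin n → ℝ)
    (hdata : ∀ i : Fin l, ∃ x : ℕ → (Fin n → ℝ), x 0 = x₀ i ∧
      ∀ k < Tini + N, x (k + 1) = f (x k) (ud i k) ∧ yd i k = g (x k) (ud i k))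
    -- lifted excitation of order L = T_ini + N:
    (hHK : (Matrix.of fun (r : (Fin (Tini + N) × Fin m) ⊕ Fin nz) (i : Fin l) =>
        Sum.elim (fun ka : Fin (Tini + N) × Fin m => ud i (ka.1 : ℕ) ka.2)
          (fun a : Fin nz => Φ (x₀ i) a) r).rank
      = Fintype.card ((Fin (Tini + N) × Fin m) ⊕ Fin nz))
    -- (u_ini, y_ini) is a length-T_ini input-output trajectory of the nonlinear system:
    (uini : ℕ → Fin m → ℝ) (yini : ℕ → Fin p → ℝ)
    (hini : ∃ x : ℕ → (Fin n → ℝ),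
      ∀ k < Tini, x (k + 1) = f (x k) (uini k) ∧ yini k = g (x k) (uini k))
    -- any future input u_F and any y_F:
    (uF : ℕ → Fin m → ℝ) (yF : ℕ → Fin p → ℝ) :
    -- the concatenated input-output sequence is a valid length-L trajectory of the
    -- nonlinear system iff ∃ g with U_P g = u_ini, Y_P g = y_ini, U_F g = u_F, Y_F g = y_F:
    (∃ x : ℕ → (Fin n → ℝ),
      ∀ k < Tini + N,
        x (k + 1) = f (x k) (if k < Tini then uini k else uF (k - Tini)) ∧
        (if k < Tini then yini k else yF (k - Tini))
          = g (x k) (if k < Tini then uini k else uF (k - Tini))) ↔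
    (∃ gc : Fin l → ℝ,
      (∀ k < Tini, ∀ a : Fin m, ∑ i : Fin l, ud i k a * gc i = uini k a) ∧
      (∀ k < Tini, ∀ b : Fin p, ∑ i : Fin l, yd i k b * gc i = yini k b) ∧
      (∀ k < N, ∀ a : Fin m, ∑ i : Fin l, ud i (Tini + k) a * gc i = uF k a) ∧
      (∀ k < N, ∀ b : Fin p, ∑ i : Fin l, yd i (Tini + k) b * gc i = yF k b)) :=
  data_driven_representation_koopman_general n m p nz Tini N l hTini f g Φ A B C D hdyn hout ud yd
    x₀ hdata hHK uini yini hini uF yF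
end

section
/- Consider an affine system x_{k+1} = Ax_k + Bu_k + e, y_k = Cx_k + Du_k + r with state dimension n̄, input dimension m̄, output dimension p̄, and constant offsets e ∈ ℝ^{n̄}, r ∈ ℝ^{p̄}. Let (u_d, x_d, y_d) be a length-n_d input-state-output trajectory of the system and 1 ≤ L ≤ n_d. Assume the matrix H_A := col(𝓗_L(u_d), 𝓗₁(x_{d,0:n_d−L}), 𝟙ᵀ) has full row rank, where 𝟙ᵀ is the all-ones row vector of length n_d−L+1. Then a length-L input-output sequence (u, y) ∈ ℝ^{(m̄+p̄)L} is a trajectory of the affine system if and only if there exists g ∈ ℝ^{n_d−L+1} such that 𝓗_L(u_d) g = u, 𝓗_L(y_d) g = y, and the entries of g sum to 1. -/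
/-!
STATEMENT 6 (Theorem 4, affine fundamental lemma): For an affine system with a
pre-collected length-n_d input-state-output trajectory (u_d, x_d, y_d) and 1 ≤ L ≤ n_d,
if H_A := col(𝓗_L(u_d), 𝓗₁(x_{d,0:n_d-L}), 𝟙ᵀ) has full row rank, then (u, y) is a
length-L trajectory of the affine system iff ∃ g with 𝓗_L(u_d) g = u, 𝓗_L(y_d) g = y
and ∑ g = 1.
-/

/-- Order-`L` (block) Hankel matrix of a length-`T` sequence of vectors in `ℝ^q`:
the `((i,a), j)` entry is the `a`-th component of `ω_{i+j}`. -/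
def hankel (q L T : ℕ) (ω : ℕ → Fin q → ℝ) :
    Matrix (Fin L × Fin q) (Fin (T - L + 1)) ℝ :=
  Matrix.of fun ia j => ω ((ia.1 : ℕ) + (j : ℕ)) ia.2

lemma surj_of_rank_eq_card {ι κ : Type*} [Fintype ι] [Fintype κ]
    (M : Matrix ι κ ℝ) (h : M.rank = Fintype.card ι) :
    Function.Surjective M.mulVec := by
  have hr : LinearMap.range M.mulVecLin = ⊤ := by
    apply Submodule.eq_top_of_finrank_eq
    rw [show Module.finrank ℝ (LinearMap.range M.mulVecLin) = M.rank from rfl, h,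
      Module.finrank_fintype_fun_eq_card]
  intro v
  obtain ⟨g, hg⟩ := (LinearMap.range_eq_top.mp hr) v
  exact ⟨g, hg⟩

/-- Key linear-combination step: if the data satisfies the affine dynamics, then the
`g`-weighted combination of shifted states satisfies the same recursion driven by the
`g`-weighted combination of shifted inputs. -/
lemma combo_step (nbar mbar nd L : ℕ) (hLnd : L ≤ nd)
    (A : Matrix (Fin nbar) (Fin nbar) ℝ) (B : Matrix (Fin nbar) (Fin mbar) ℝ)
    (e : Fin nbar → ℝ)
    (ud : ℕ → Fin mbar → ℝ) (xd : ℕ → Fin nbar → ℝ)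
    (hdata : ∀ k < nd, xd (k + 1) = A.mulVec (xd k) + B.mulVec (ud k) + e)
    (g : Fin (nd - L + 1) → ℝ) (k : ℕ) (hk : k < L) :
    (∑ j : Fin (nd - L + 1), g j • xd ((j : ℕ) + (k + 1))) =
      A.mulVec (∑ j : Fin (nd - L + 1), g j • xd ((j : ℕ) + k)) +
      B.mulVec (∑ j : Fin (nd - L + 1), g j • ud ((j : ℕ) + k)) +
      (∑ j : Fin (nd - L + 1), g j) • e := by
  have h1 : ∀ j : Fin (nd - L + 1), xd ((j : ℕ) + (k + 1)) =
      A.mulVec (xd ((j : ℕ) + k)) + B.mulVec (ud ((j : ℕ) + k)) + e := by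
    intro j
    have hj : (j : ℕ) + k < nd := by have := j.isLt; omega
    have := hdata ((j : ℕ) + k) hj
    rw [show (j : ℕ) + (k + 1) = ((j : ℕ) + k) + 1 by omega]
    exact this
  calc (∑ j : Fin (nd - L + 1), g j • xd ((j : ℕ) + (k + 1)))
      = ∑ j : Fin (nd - L + 1), (g j • A.mulVec (xd ((j : ℕ) + k)) +
          g j • B.mulVec (ud ((j : ℕ) + k)) + g j • e) := by
        refine Finset.sum_congr rfl fun j _ => ?_
        rw [h1 j, smul_add, smul_add]
    _ = A.mulVec (∑ j : Fin (nd - L + 1), g j • xd ((j : ℕ) + k)) +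
          B.mulVec (∑ j : Fin (nd - L + 1), g j • ud ((j : ℕ) + k)) +
          (∑ j : Fin (nd - L + 1), g j) • e := by
        rw [Finset.sum_add_distrib, Finset.sum_add_distrib]
        congr 1
        · congr 1
          · rw [← A.mulVecLin_apply, map_sum]
            refine Finset.sum_congr rfl fun j _ => ?_
            rw [map_smul, A.mulVecLin_apply]
          · rw [← B.mulVecLin_apply, map_sum]
            refine Finset.sum_congr rfl fun j _ => ?_
            rw [map_smul, B.mulVecLin_apply]
        · rw [Finset.sum_smul]

theorem affine_fundamental_lemma
    (nbar mbar pbar nd L : ℕ) (hL : 1 ≤ L) (hLnd : L ≤ nd)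
    (A : Matrix (Fin nbar) (Fin nbar) ℝ) (B : Matrix (Fin nbar) (Fin mbar) ℝ)
    (C : Matrix (Fin pbar) (Fin nbar) ℝ) (D : Matrix (Fin pbar) (Fin mbar) ℝ)
    (e : Fin nbar → ℝ) (r : Fin pbar → ℝ)
    (ud : ℕ → Fin mbar → ℝ) (xd : ℕ → Fin nbar → ℝ) (yd : ℕ → Fin pbar → ℝ)
    -- (u_d, x_d, y_d) is a length-n_d input-state-output trajectory of the affine system:
    (hdata : ∀ k < nd, xd (k + 1) = A.mulVec (xd k) + B.mulVec (ud k) + e ∧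
      yd k = C.mulVec (xd k) + D.mulVec (ud k) + r)
    -- H_A = col(𝓗_L(u_d), 𝓗₁(x_{d,0:n_d-L}), 𝟙ᵀ) has full row rank:
    (hrank : (Matrix.fromRows (hankel mbar L nd ud)
        (Matrix.fromRows
          (Matrix.of fun (a : Fin nbar) (j : Fin (nd - L + 1)) => xd (j : ℕ) a)
          (Matrix.of fun (_ : Unit) (_ : Fin (nd - L + 1)) => (1 : ℝ)))).rank
      = Fintype.card ((Fin L × Fin mbar) ⊕ (Fin nbar ⊕ Unit)))
    (u : ℕ → Fin mbar → ℝ) (y : ℕ → Fin pbar → ℝ) :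
    -- (u, y) is a length-L trajectory of the affine system iff
    (∃ x : ℕ → (Fin nbar → ℝ),
      ∀ k < L, x (k + 1) = A.mulVec (x k) + B.mulVec (u k) + e ∧
        y k = C.mulVec (x k) + D.mulVec (u k) + r) ↔
    -- ∃ g with 𝓗_L(u_d) g = u, 𝓗_L(y_d) g = y and the entries of g summing to 1:
    (∃ g : Fin (nd - L + 1) → ℝ,
      (hankel mbar L nd ud).mulVec g = (fun ia : Fin L × Fin mbar => u (ia.1 : ℕ) ia.2) ∧
      (hankel pbar L nd yd).mulVec g = (fun ia : Fin L × Fin pbar => y (ia.1 : ℕ) ia.2) ∧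
      ∑ j : Fin (nd - L + 1), g j = 1) := by
  have hdyn : ∀ k < nd, xd (k + 1) = A.mulVec (xd k) + B.mulVec (ud k) + e :=
    fun k hk => (hdata k hk).1
  have hout : ∀ k < nd, yd k = C.mulVec (xd k) + D.mulVec (ud k) + r :=
    fun k hk => (hdata k hk).2
  -- Hankel mulVec entries:
  have hankel_entry : ∀ (q : ℕ) (ω : ℕ → Fin q → ℝ) (g : Fin (nd - L + 1) → ℝ)
      (k : Fin L) (a : Fin q),
      (hankel q L nd ω).mulVec g (k, a) =
        (∑ j : Fin (nd - L + 1), g j • ω ((j : ℕ) + (k : ℕ))) a := by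
    intro q ω g k a
    simp only [Matrix.mulVec, dotProduct, hankel, Matrix.of_apply,
      Finset.sum_apply, Pi.smul_apply, smul_eq_mul]
    refine Finset.sum_congr rfl fun j _ => ?_
    rw [mul_comm, Nat.add_comm (k : ℕ) (j : ℕ)]
  constructor
  · rintro ⟨x, hx⟩
    -- surjectivity of H_A gives g matching u, x 0, and 1
    have hsurj := surj_of_rank_eq_card _ hrank
    obtain ⟨g, hg⟩ := hsurj (Sum.elim (fun ia : Fin L × Fin mbar => u (ia.1 : ℕ) ia.2)
      (Sum.elim (fun a => x 0 a) (fun _ => (1 : ℝ))))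
    rw [Matrix.fromRows_mulVec, Matrix.fromRows_mulVec] at hg
    have hu : (hankel mbar L nd ud).mulVec g =
        fun ia : Fin L × Fin mbar => u (ia.1 : ℕ) ia.2 := by
      funext ia
      have := congrFun hg (Sum.inl ia)
      simpa using this
    have hx0 : ∀ a, (∑ j : Fin (nd - L + 1), g j • xd (j : ℕ)) a = x 0 a := by
      intro a
      have := congrFun hg (Sum.inr (Sum.inl a))
      simp only [Sum.elim_inr, Sum.elim_inl] at this
      simp only [← this, Matrix.mulVec, dotProduct, Matrix.of_apply,
        Finset.sum_apply, Pi.smul_apply, smul_eq_mul]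
      exact Finset.sum_congr rfl fun j _ => mul_comm _ _
    have hsum : ∑ j : Fin (nd - L + 1), g j = 1 := by
      have := congrFun hg (Sum.inr (Sum.inr ()))
      simp only [Sum.elim_inr] at this
      simpa [Matrix.mulVec, dotProduct] using this
    -- the weighted state combo tracks x
    have hState : ∀ k ≤ L, (∑ j : Fin (nd - L + 1), g j • xd ((j : ℕ) + k)) = x k := by
      intro k
      induction k with
      | zero => intro _; funext a; simpa using hx0 a
      | succ k ih =>
        intro hk1
        have hk : k < L := hk1
        rw [combo_step nbar mbar nd L hLnd A B e ud xd hdyn g k hk, ih (le_of_lt hk), hsum,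
          one_smul]
        have huk : (∑ j : Fin (nd - L + 1), g j • ud ((j : ℕ) + k)) = u k := by
          funext c
          have := congrFun hu (⟨k, hk⟩, c)
          rw [hankel_entry mbar ud g ⟨k, hk⟩ c] at this
          exact this
        rw [huk, (hx k hk).1]
    have hUvec : ∀ kk : Fin L, (∑ j : Fin (nd - L + 1), g j • ud ((j : ℕ) + (kk : ℕ))) =
        u (kk : ℕ) := by
      intro kk; funext c
      have h' := congrFun hu (kk, c)
      rw [hankel_entry mbar ud g kk c] at h'
      exact h'
    refine ⟨g, hu, ?_, hsum⟩
    funext ia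
    obtain ⟨k, a⟩ := ia
    rw [hankel_entry pbar yd g k a]
    have h1 : ∀ j : Fin (nd - L + 1), yd ((j : ℕ) + (k : ℕ)) =
        C.mulVec (xd ((j : ℕ) + (k : ℕ))) + D.mulVec (ud ((j : ℕ) + (k : ℕ))) + r := by
      intro j
      exact hout _ (by have := j.isLt; have := k.isLt; omega)
    have hyk : (∑ j : Fin (nd - L + 1), g j • yd ((j : ℕ) + (k : ℕ))) =
        C.mulVec (x (k : ℕ)) + D.mulVec (u (k : ℕ)) + r := by
      calc (∑ j : Fin (nd - L + 1), g j • yd ((j : ℕ) + (k : ℕ)))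
          = ∑ j : Fin (nd - L + 1), (g j • C.mulVec (xd ((j : ℕ) + (k : ℕ))) +
              g j • D.mulVec (ud ((j : ℕ) + (k : ℕ))) + g j • r) := by
            refine Finset.sum_congr rfl fun j _ => ?_
            rw [h1 j, smul_add, smul_add]
        _ = C.mulVec (∑ j : Fin (nd - L + 1), g j • xd ((j : ℕ) + (k : ℕ))) +
              D.mulVec (∑ j : Fin (nd - L + 1), g j • ud ((j : ℕ) + (k : ℕ))) +
              (∑ j : Fin (nd - L + 1), g j) • r := by
            rw [Finset.sum_add_distrib, Finset.sum_add_distrib]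
            congr 1
            · congr 1
              · rw [← C.mulVecLin_apply, map_sum]
                refine Finset.sum_congr rfl fun j _ => ?_
                rw [map_smul, C.mulVecLin_apply]
              · rw [← D.mulVecLin_apply, map_sum]
                refine Finset.sum_congr rfl fun j _ => ?_
                rw [map_smul, D.mulVecLin_apply]
            · rw [Finset.sum_smul]
        _ = C.mulVec (x (k : ℕ)) + D.mulVec (u (k : ℕ)) + r := by
            rw [hState (k : ℕ) (le_of_lt k.isLt), hUvec k, hsum, one_smul]
    rw [hyk]
    exact (congrFun ((hx (k : ℕ) k.isLt).2) a).symm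
  · rintro ⟨g, hu, hy, hsum⟩
    have hUvec : ∀ kk : Fin L, (∑ j : Fin (nd - L + 1), g j • ud ((j : ℕ) + (kk : ℕ))) =
        u (kk : ℕ) := by
      intro kk; funext c
      have h' := congrFun hu (kk, c)
      rw [hankel_entry mbar ud g kk c] at h'
      exact h'
    have hYvec : ∀ kk : Fin L, (∑ j : Fin (nd - L + 1), g j • yd ((j : ℕ) + (kk : ℕ))) =
        y (kk : ℕ) := by
      intro kk; funext c
      have h' := congrFun hy (kk, c)
      rw [hankel_entry pbar yd g kk c] at h'
      exact h'
    refine ⟨fun k => ∑ j : Fin (nd - L + 1), g j • xd ((j : ℕ) + k), fun k hk => ?_⟩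
    constructor
    · show (∑ j : Fin (nd - L + 1), g j • xd ((j : ℕ) + (k + 1))) =
        A.mulVec (∑ j : Fin (nd - L + 1), g j • xd ((j : ℕ) + k)) + B.mulVec (u k) + e
      rw [combo_step nbar mbar nd L hLnd A B e ud xd hdyn g k hk, hsum, one_smul,
        hUvec ⟨k, hk⟩]
    · show y k = C.mulVec (∑ j : Fin (nd - L + 1), g j • xd ((j : ℕ) + k)) +
        D.mulVec (u k) + r
      have h1 : ∀ j : Fin (nd - L + 1), yd ((j : ℕ) + k) =
          C.mulVec (xd ((j : ℕ) + k)) + D.mulVec (ud ((j : ℕ) + k)) + r := by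
        intro j
        exact hout _ (by have := j.isLt; omega)
      rw [← hYvec ⟨k, hk⟩]
      calc (∑ j : Fin (nd - L + 1), g j • yd ((j : ℕ) + k))
          = ∑ j : Fin (nd - L + 1), (g j • C.mulVec (xd ((j : ℕ) + k)) +
              g j • D.mulVec (ud ((j : ℕ) + k)) + g j • r) := by
            refine Finset.sum_congr rfl fun j _ => ?_
            rw [h1 j, smul_add, smul_add]
        _ = C.mulVec (∑ j : Fin (nd - L + 1), g j • xd ((j : ℕ) + k)) +
              D.mulVec (∑ j : Fin (nd - L + 1), g j • ud ((j : ℕ) + k)) +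
              (∑ j : Fin (nd - L + 1), g j) • r := by
            rw [Finset.sum_add_distrib, Finset.sum_add_distrib]
            congr 1
            · congr 1
              · rw [← C.mulVecLin_apply, map_sum]
                refine Finset.sum_congr rfl fun j _ => ?_
                rw [map_smul, C.mulVecLin_apply]
              · rw [← D.mulVecLin_apply, map_sum]
                refine Finset.sum_congr rfl fun j _ => ?_
                rw [map_smul, D.mulVecLin_apply]
            · rw [Finset.sum_smul]
        _ = _ := by rw [hUvec ⟨k, hk⟩, hsum, one_smul]
end
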